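/- A simplicial set X is isomorphic to the nerve of a small category if and only if for every k ≥ 1 the canonical map X_k → X_1 ×_{X_0} ⋯ ×_{X_0} X_1 (induced by the k inclusions [1] → [k] of consecutive edges, with fibre products over source/target maps to X_0) is a bijection. -/

import Mathlib

/-!
For a strict Segal simplicial set `X`, the vertices and edges of `X` form a category `C`: two
composable edges span a unique 2-simplex, whose long edge is their composite. The key fact is
that in any simplex the composite of the edges `i → j` and `j → k` is the edge `i → k`. Applied
to the 3-simplex with a given spine it gives associativity, applied to an edge viewed as a
1-simplex (whose edges `0 → 0` and `1 → 1` are degenerate) it gives the unit laws, and it makes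
every `n`-simplex a functor `Fin (n + 1) ⥤ C`. The resulting map `X_n → (nerve C)_n` is bijective
because both sides are determined by their spines. Conversely, nerves are strict Segal and the
condition transfers along isomorphisms; for `k = 0` the spine map is always bijective.
-/

open CategoryTheory Simplicial SimplexCategory Opposite

universe u

lemma SimplexCategory.mkOfSucc_eq_mkOfLe {n : ℕ} (i : Fin n) :
    mkOfSucc i = mkOfLe i.castSucc i.succ (Fin.castSucc_le_succ i) :=
  Hom.ext_one_left _ _

namespace SSet

variable {X : SSet.{u}}

lemma map_map_of_comp_eq {k m n : SimplexCategory} {f : m ⟶ n} {g : k ⟶ m} {h : k ⟶ n}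
    (w : g ≫ f = h) (Δ : X.obj (op n)) : X.map g.op (X.map f.op Δ) = X.map h.op Δ := by
  rw [← w, op_comp, Functor.map_comp_apply]

lemma map_mkOfLe_zero_one (e : X _⦋1⦌) : X.map (mkOfLe 0 1 zero_le_one).op e = e := by
  rw [show mkOfLe (0 : Fin 2) 1 zero_le_one = 𝟙 _ by decide, op_id, Functor.map_id_apply]

lemma spine_zero_bijective (X : SSet.{u}) : Function.Bijective (X.spine 0) := by
  refine Function.bijective_iff_has_inverse.2 ⟨fun p ↦ p.vertex 0, fun Δ ↦ ?_, fun p ↦ ?_⟩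
  · simp [Subsingleton.elim (SimplexCategory.const ⦋0⦌ ⦋0⦌ 0) (𝟙 _)]
  · ext
    simp [Subsingleton.elim (SimplexCategory.const ⦋0⦌ ⦋0⦌ 0) (𝟙 _)]

lemma IsStrictSegal.of_iso {Y : SSet.{u}} (e : X ≅ Y) [Y.IsStrictSegal] : X.IsStrictSegal where
  segal n := by
    have hmap : Function.Bijective fun p : Y.Path n ↦ p.map e.inv :=
      Function.bijective_iff_has_inverse.2
        ⟨fun p ↦ p.map e.hom, fun p ↦ by ext <;> simp, fun p ↦ by ext <;> simp⟩
    have hspine : X.spine n = (fun p ↦ p.map e.inv) ∘ Y.spine n ∘ e.hom.app _ := by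
      funext Δ
      ext <;> simp [NatTrans.naturality_apply]
    rw [hspine]
    exact hmap.comp ((IsStrictSegal.segal n).comp ((isIso_iff_bijective _).1 inferInstance))

def simplexEdge {n : ℕ} (Δ : X _⦋n⦌) {i j : Fin (n + 1)} (h : i ≤ j) :
    Edge (X.map (SimplexCategory.const ⦋0⦌ ⦋n⦌ i).op Δ)
      (X.map (SimplexCategory.const ⦋0⦌ ⦋n⦌ j).op Δ) :=
  Edge.mk (X.map (mkOfLe i j h).op Δ) (map_map_of_comp_eq (Hom.ext_zero_left _ _) Δ)
    (map_map_of_comp_eq (Hom.ext_zero_left _ _) Δ)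

lemma simplexEdge_self {n : ℕ} (Δ : X _⦋n⦌) (i : Fin (n + 1)) :
    simplexEdge Δ (le_refl i) = Edge.id _ :=
  Edge.ext (map_map_of_comp_eq (f := SimplexCategory.const ⦋0⦌ ⦋n⦌ i)
    (Hom.ext_one_left _ _) Δ).symm

def Edge.path₂ {x₀ x₁ x₂ : X _⦋0⦌} (f : Edge x₀ x₁) (g : Edge x₁ x₂) : X.Path 2 where
  vertex := ![x₀, x₁, x₂]
  arrow := ![f.edge, g.edge]
  arrow_src i := by fin_cases i; exacts [f.src_eq, g.src_eq]
  arrow_tgt i := by fin_cases i; exacts [f.tgt_eq, g.tgt_eq]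

section StrictSegal

variable [X.IsStrictSegal] {x₀ x₁ x₂ : X _⦋0⦌}

lemma spineToSimplex_map_mkOfLe {n : ℕ} (p : X.Path n) (i : Fin n) :
    X.map (mkOfLe i.castSucc i.succ (Fin.castSucc_le_succ i)).op
      ((StrictSegal.ofIsStrictSegal X).spineToSimplex p) = p.arrow i := by
  rw [← mkOfSucc_eq_mkOfLe, StrictSegal.spineToSimplex_arrow]

noncomputable def Edge.segalComp (f : Edge x₀ x₁) (g : Edge x₁ x₂) : Edge x₀ x₂ :=
  let s := (StrictSegal.ofIsStrictSegal X).spineToSimplex (f.path₂ g)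
  (simplexEdge s (show (0 : Fin 3) ≤ 2 by decide)).ofEq
    ((StrictSegal.ofIsStrictSegal X).spineToSimplex_vertex 0 _)
    ((StrictSegal.ofIsStrictSegal X).spineToSimplex_vertex 2 _)

lemma Edge.segalComp_edge_eq_map_mkOfLe {n : ℕ} (Δ : X _⦋n⦌) {i j k : Fin (n + 1)}
    (hij : i ≤ j) (hjk : j ≤ k) {f : Edge x₀ x₁} {g : Edge x₁ x₂}
    (hf : f.edge = X.map (mkOfLe i j hij).op Δ) (hg : g.edge = X.map (mkOfLe j k hjk).op Δ) :
    (f.segalComp g).edge = X.map (mkOfLe i k (hij.trans hjk)).op Δ := by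
  have hspine : X.spine 2 (X.map (mkOfLeComp i j k hij hjk).op Δ) = f.path₂ g := by
    ext a
    fin_cases a
    · exact (map_map_of_comp_eq (Hom.ext_one_left _ _) Δ).trans hf.symm
    · exact (map_map_of_comp_eq (Hom.ext_one_left _ _) Δ).trans hg.symm
  simp only [segalComp, simplexEdge, ← hspine, StrictSegal.spineToSimplex_spine_apply]
  exact map_map_of_comp_eq (Hom.ext_one_left _ _) Δ

lemma simplexEdge_segalComp {n : ℕ} (Δ : X _⦋n⦌) {i j k : Fin (n + 1)} (hij : i ≤ j)
    (hjk : j ≤ k) :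
    (simplexEdge Δ hij).segalComp (simplexEdge Δ hjk) = simplexEdge Δ (hij.trans hjk) :=
  Edge.ext (Edge.segalComp_edge_eq_map_mkOfLe Δ hij hjk rfl rfl)

lemma Edge.id_segalComp (f : Edge x₀ x₁) : (Edge.id x₀).segalComp f = f := by
  refine Edge.ext <| (Edge.segalComp_edge_eq_map_mkOfLe f.edge (i := 0) (j := 0) (k := 1)
    le_rfl zero_le_one ?_ (map_mkOfLe_zero_one _).symm).trans (map_mkOfLe_zero_one _)
  exact (congrArg (X.σ 0 ·) f.src_eq).symm.trans (map_map_of_comp_eq (Hom.ext_one_left _ _) _)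

lemma Edge.segalComp_id (f : Edge x₀ x₁) : f.segalComp (Edge.id x₁) = f := by
  refine Edge.ext <| (Edge.segalComp_edge_eq_map_mkOfLe f.edge (i := 0) (j := 1) (k := 1)
    zero_le_one le_rfl (map_mkOfLe_zero_one _).symm ?_).trans (map_mkOfLe_zero_one _)
  exact (congrArg (X.σ 0 ·) f.tgt_eq).symm.trans (map_map_of_comp_eq (Hom.ext_one_left _ _) _)

lemma Edge.segalComp_assoc {x₃ : X _⦋0⦌} (f : Edge x₀ x₁) (g : Edge x₁ x₂) (h : Edge x₂ x₃) :
    (f.segalComp g).segalComp h = f.segalComp (g.segalComp h) := by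
  let p : X.Path 3 :=
    { vertex := ![x₀, x₁, x₂, x₃]
      arrow := ![f.edge, g.edge, h.edge]
      arrow_src i := by fin_cases i; exacts [f.src_eq, g.src_eq, h.src_eq]
      arrow_tgt i := by fin_cases i; exacts [f.tgt_eq, g.tgt_eq, h.tgt_eq] }
  -- both composites are the edge `0 → 3` of the 3-simplex with spine `p`
  have hf := spineToSimplex_map_mkOfLe p 0
  have hg := spineToSimplex_map_mkOfLe p 1
  have hh := spineToSimplex_map_mkOfLe p 2
  have hfg := Edge.segalComp_edge_eq_map_mkOfLe _ _ _ hf.symm hg.symm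
  have hgh := Edge.segalComp_edge_eq_map_mkOfLe _ _ _ hg.symm hh.symm
  exact Edge.ext ((Edge.segalComp_edge_eq_map_mkOfLe _ _ _ hfg hh.symm).trans
    (Edge.segalComp_edge_eq_map_mkOfLe _ _ _ hf.symm hgh).symm)

def SegalCategory (X : SSet.{u}) : Type u := X _⦋0⦌

noncomputable instance : SmallCategory (SegalCategory X) where
  Hom x y := Edge (X := X) x y
  id x := Edge.id x
  comp f g := f.segalComp g
  id_comp := Edge.id_segalComp
  comp_id := Edge.segalComp_id
  assoc := Edge.segalComp_assoc

namespace SegalCategory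

lemma eq_eqToHom_comp_of_edge_eq {x y x' y' : SegalCategory X} {f : x ⟶ y} {g : x' ⟶ y'}
    (p : x = x') (q : y' = y) (h : Edge.edge f = Edge.edge g) :
    f = eqToHom p ≫ g ≫ eqToHom q := by
  subst p q
  simpa using Edge.ext h

noncomputable def toNerveSimplex {n : ℕ} (Δ : X _⦋n⦌) : ComposableArrows (SegalCategory X) n where
  obj i := X.map (SimplexCategory.const ⦋0⦌ ⦋n⦌ i).op Δ
  map h := simplexEdge Δ (leOfHom h)
  map_id i := simplexEdge_self Δ i
  map_comp h h' := (simplexEdge_segalComp Δ (leOfHom h) (leOfHom h')).symm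

lemma toNerveSimplex_map {m n : ℕ} (α : ⦋m⦌ ⟶ ⦋n⦌) (Δ : X _⦋n⦌) :
    toNerveSimplex (X.map α.op Δ) = (nerve _).map α.op (toNerveSimplex Δ) :=
  CategoryTheory.Functor.ext (fun _ ↦ map_map_of_comp_eq (SimplexCategory.const_comp _ _ _) Δ)
    (fun _ _ _ ↦ eq_eqToHom_comp_of_edge_eq _ _ (map_map_of_comp_eq (Hom.ext_one_left _ _) Δ))

lemma toNerveSimplex_injective {n : ℕ} :
    Function.Injective (toNerveSimplex (X := X) (n := n)) := by
  intro Δ Δ' h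
  refine (IsStrictSegal.segal n).1
    (Path.ext (funext fun i ↦ congrArg (·.obj i) h) (funext fun i ↦ ?_))
  rw [spine_arrow, spine_arrow, mkOfSucc_eq_mkOfLe]
  exact congrArg (fun F ↦ Edge.edge (F.map (homOfLE (Fin.castSucc_le_succ i)))) h

lemma toNerveSimplex_surjective {n : ℕ} :
    Function.Surjective (toNerveSimplex (X := X) (n := n)) := by
  intro F
  let p : X.Path n :=
    { vertex := F.obj
      arrow i := Edge.edge (F.map (homOfLE (Fin.castSucc_le_succ i)))
      arrow_src _ := Edge.src_eq _
      arrow_tgt _ := Edge.tgt_eq _ }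
  refine ⟨(StrictSegal.ofIsStrictSegal X).spineToSimplex p,
    ComposableArrows.ext (fun i ↦ StrictSegal.spineToSimplex_vertex _ i p) (fun i hi ↦ ?_)⟩
  exact eq_eqToHom_comp_of_edge_eq _ _ (spineToSimplex_map_mkOfLe p ⟨i, hi⟩)

noncomputable def toNerve (X : SSet.{u}) [X.IsStrictSegal] : X ⟶ nerve (SegalCategory X) where
  app m := ↾(toNerveSimplex (n := m.unop.len))
  naturality _ _ α := by
    ext Δ
    exact toNerveSimplex_map α.unop Δ

instance : IsIso (toNerve X) :=
  have (m : SimplexCategoryᵒᵖ) : IsIso ((toNerve X).app m) :=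
    (isIso_iff_bijective _).2 ⟨toNerveSimplex_injective, toNerveSimplex_surjective⟩
  NatIso.isIso_of_isIso_app _

end SegalCategory

end StrictSegal

end SSet

open SSet in
/-- A simplicial set is isomorphic to the nerve of a small category iff it satisfies the
Segal condition: for every `k ≥ 1` the spine map `X_k → X_1 ×_{X_0} ⋯ ×_{X_0} X_1`
(with values in the type `X.Path k` of composable paths of edges) is a bijection. -/
theorem iso_nerve_iff_segal (X : SSet.{u}) :
    (∃ (C : Type u) (_ : SmallCategory C), Nonempty (X ≅ nerve C)) ↔
      (∀ k : ℕ, 1 ≤ k → Function.Bijective (X.spine k)) := by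
  constructor
  · rintro ⟨C, _, ⟨e⟩⟩ k -
    have := IsStrictSegal.of_iso e
    exact IsStrictSegal.segal k
  · intro h
    have hspine (k : ℕ) : Function.Bijective (X.spine k) := by
      cases k with
      | zero => exact spine_zero_bijective X
      | succ k => exact h (k + 1) k.succ_pos
    have : X.IsStrictSegal := ⟨hspine⟩
    exact ⟨SegalCategory X, inferInstance, ⟨asIso (SegalCategory.toNerve X)⟩⟩
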